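/- Let G be a finite group and N a normal subgroup of G. Then the Knutson subindex 𝒦(G,N), the greatest common divisor of Ind(G,N), equals 1 if and only if for every prime p and every Sylow p-subgroup P of G, N∩P has a complement in P (i.e. all the extensions 1 → N∩P → P → P/(N∩P) → 1 split). -/

import Mathlib

/-!
The gcd of a set of naturals is `1` iff no prime divides all of its elements, so it suffices to
fix `p` and a Sylow subgroup `P`. Write `v` for the `p`-adic valuation. If `K ⊓ N = ⊥` and
`m · |N| · |K| = |G|`, then `p ∤ m` exactly when `v |N| + v |K| = v |G|`. Some conjugate of `K`
meets `P` in a Sylow subgroup of that conjugate, of order `p ^ v |K|`, and likewise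
`|N ⊓ P| = p ^ v |N|`; so an element of `Ind(G,N)` prime to `p` yields a complement of `N ⊓ P`
in `P`. Conversely a complement `K` gives the element `[G : N ⊔ K]`, by the product formula
`|N ⊔ K| = |N| · |K|`.
-/

/-- `Ind(G,N)`: the set of `m ∈ ℕ` such that there is a subgroup `K ≤ G` with
`K ∩ N = {e}` and `m·|N|·|K| = |G|`. -/
def knutsonInd {G : Type*} [Group G] (N : Subgroup G) : Set ℕ :=
  {m | ∃ K : Subgroup G, K ⊓ N = ⊥ ∧ m * Nat.card N * Nat.card K = Nat.card G}

/-- `d` is the greatest common divisor of the set `S ⊆ ℕ`: it divides every element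
of `S`, and every common divisor of `S` divides `d`. -/
def IsGCDOf (S : Set ℕ) (d : ℕ) : Prop :=
  (∀ m ∈ S, d ∣ m) ∧ ∀ c : ℕ, (∀ m ∈ S, c ∣ m) → c ∣ d

open Subgroup Pointwise

theorem IsGCDOf.eq_one_iff {S : Set ℕ} {d : ℕ} (h : IsGCDOf S d) :
    d = 1 ↔ ∀ p : ℕ, p.Prime → ∃ m ∈ S, ¬ p ∣ m := by
  constructor
  · rintro rfl p hp
    by_contra! hdvd
    exact hp.not_dvd_one (h.2 p hdvd)
  · intro h'
    by_contra hd
    obtain ⟨p, hp, hpd⟩ := Nat.exists_prime_and_dvd hd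
    obtain ⟨m, hm, hpm⟩ := h' p hp
    exact hpm (hpd.trans (h.1 m hm))

theorem Set.Finite.exists_isGCDOf {S : Set ℕ} (hS : S.Finite) : ∃ d, IsGCDOf S d :=
  ⟨hS.toFinset.gcd id, fun _ hm => Finset.gcd_dvd (hS.mem_toFinset.mpr hm),
    fun _ hc => Finset.dvd_gcd fun m hm => hc m (hS.mem_toFinset.mp hm)⟩

theorem forall_isGCDOf_eq_one_iff {S : Set ℕ} (hS : S.Finite) :
    (∀ d, IsGCDOf S d → d = 1) ↔ ∀ p : ℕ, p.Prime → ∃ m ∈ S, ¬ p ∣ m := by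
  obtain ⟨d, hd⟩ := hS.exists_isGCDOf
  exact ⟨fun h => hd.eq_one_iff.mp (h d hd), fun h d' hd' => hd'.eq_one_iff.mpr h⟩

theorem not_dvd_iff_factorization_add_eq {p m a b n : ℕ} (hp : p.Prime) (h : m * a * b = n)
    (hn : n ≠ 0) : ¬ p ∣ m ↔ a.factorization p + b.factorization p = n.factorization p := by
  subst h
  have hm : m ≠ 0 := by rintro rfl; simp at hn
  have ha : a ≠ 0 := by rintro rfl; simp at hn
  have hb : b ≠ 0 := by rintro rfl; simp at hn
  rw [Nat.factorization_mul (mul_ne_zero hm ha) hb, Nat.factorization_mul hm ha]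
  have hv : m.factorization p = 0 ↔ ¬ p ∣ m := by simp [Nat.factorization_eq_zero_iff, hp, hm]
  rw [Finsupp.add_apply, Finsupp.add_apply, ← hv]
  omega

section

variable {G : Type*} [Group G]

theorem card_mul_card_eq_card_sup_of_inf_eq_bot {N K : Subgroup G} [N.Normal] (h : K ⊓ N = ⊥) :
    Nat.card N * Nat.card K = Nat.card (N ⊔ K : Subgroup G) := by
  have h1 := relIndex_mul_relIndex ⊥ N (N ⊔ K) bot_le le_sup_left
  rw [relIndex_bot_left, relIndex_bot_left] at h1
  rw [← h1, relIndex_sup_left, ← inf_relIndex_right N K, inf_comm, h, relIndex_bot_left]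

theorem index_sup_mul_card_mul_card_eq {N K : Subgroup G} [N.Normal] (h : K ⊓ N = ⊥) :
    (N ⊔ K).index * Nat.card N * Nat.card K = Nat.card G := by
  rw [mul_assoc, card_mul_card_eq_card_sup_of_inf_eq_bot h, index_mul_card]

theorem conj_smul_inf_eq_bot {N K : Subgroup G} [N.Normal] (h : K ⊓ N = ⊥) (g : G) :
    MulAut.conj g • K ⊓ N = ⊥ := by
  rw [← Normal.conj_smul_eq_self g N, ← smul_inf, h, smul_bot]

theorem knutsonInd_finite [Finite G] (N : Subgroup G) : (knutsonInd N).Finite := by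
  refine (Nat.divisors (Nat.card G)).finite_toSet.subset ?_
  rintro m ⟨K, -, hm⟩
  refine Nat.mem_divisors.mpr ⟨⟨Nat.card N * Nat.card K, ?_⟩, Nat.card_pos.ne'⟩
  rw [← hm, mul_assoc]

variable [Finite G] {p : ℕ} [hp : Fact p.Prime]

theorem Sylow.exists_card_inf_conj_smul_eq (P : Sylow p G) (H : Subgroup G) :
    ∃ g : G, Nat.card (P ⊓ MulAut.conj g • H : Subgroup G) =
      p ^ (Nat.card H).factorization p := by
  let Q : Subgroup G := (Nonempty.some inferInstance : Sylow p H).1.map H.subtype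
  have hQ : Nat.card Q = p ^ (Nat.card H).factorization p := by
    rw [card_map_of_injective H.subtype_injective, Sylow.card_eq_multiplicity]
  obtain ⟨P₀, hQP₀⟩ := (Sylow.isPGroup' _).map H.subtype |>.exists_le_sylow
  obtain ⟨g, rfl⟩ := MulAction.exists_smul_eq G P₀ P
  refine ⟨g, Nat.dvd_antisymm ?_ ?_⟩
  · obtain ⟨k, hk⟩ := IsPGroup.iff_card.mp ((g • P₀).isPGroup'.to_le inf_le_left)
    have hdvd := card_dvd_of_le
      (inf_le_right : ((g • P₀ : Sylow p G) : Subgroup G) ⊓ _ ≤ MulAut.conj g • H)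
    rw [← Nat.card_congr (Subgroup.equivSMul (MulAut.conj g) H).toEquiv, hk] at hdvd
    rw [hk]
    exact (hp.out.pow_dvd_iff_dvd_ordProj Nat.card_pos.ne').mp hdvd
  · rw [← hQ, Nat.card_congr (Subgroup.equivSMul (MulAut.conj g) Q).toEquiv]
    refine card_dvd_of_le (le_inf ?_ (pointwise_smul_le_pointwise_smul_iff.mpr (map_subtype_le _)))
    rw [Sylow.coe_subgroup_smul]
    exact pointwise_smul_le_pointwise_smul_iff.mpr hQP₀

theorem card_inf_sylow_of_normal (N : Subgroup G) [N.Normal] (P : Sylow p G) :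
    Nat.card (N ⊓ P : Subgroup G) = p ^ (Nat.card N).factorization p := by
  obtain ⟨g, hg⟩ := P.exists_card_inf_conj_smul_eq N
  rwa [Normal.conj_smul_eq_self, inf_comm] at hg

theorem exists_mem_knutsonInd_not_dvd_iff (N : Subgroup G) [N.Normal] (P : Sylow p G) :
    (∃ m ∈ knutsonInd N, ¬ p ∣ m) ↔
      ∃ K : Subgroup G, K ≤ P ∧ K ⊓ N = ⊥ ∧
        Nat.card K * Nat.card (N ⊓ P : Subgroup G) = Nat.card P := by
  rw [card_inf_sylow_of_normal, P.card_eq_multiplicity]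
  constructor
  · rintro ⟨m, ⟨K, hKN, hm⟩, hpm⟩
    have hv := (not_dvd_iff_factorization_add_eq hp.out hm Nat.card_pos.ne').mp hpm
    obtain ⟨g, hg⟩ := P.exists_card_inf_conj_smul_eq K
    refine ⟨P ⊓ MulAut.conj g • K, inf_le_left, ?_, ?_⟩
    · exact le_bot_iff.mp (conj_smul_inf_eq_bot hKN g ▸ inf_le_inf_right N inf_le_right)
    · rw [hg, ← pow_add, add_comm, hv]
  · rintro ⟨K, -, hKN, hcard⟩
    refine ⟨_, ⟨K, hKN, index_sup_mul_card_mul_card_eq hKN⟩, ?_⟩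
    rw [not_dvd_iff_factorization_add_eq hp.out (index_sup_mul_card_mul_card_eq hKN)
      Nat.card_pos.ne', add_comm]
    have hv := congrArg (·.factorization p) hcard
    simpa [Nat.factorization_mul Nat.card_pos.ne' (pow_ne_zero _ hp.out.ne_zero),
      hp.out.factorization_self] using hv

end

/-- Let `G` be a finite group and `N ⊴ G`. The Knutson subindex
`𝒦(G,N) = gcd(Ind(G,N))` equals `1` if and only if for every prime `p` and every
Sylow `p`-subgroup `P` of `G`, the subgroup `N ∩ P` has a complement in `P`
(i.e. all the extensions `1 → N∩P → P → P/(N∩P) → 1` split). -/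
theorem knutson_subindex_eq_one_iff_sylow_split {G : Type*} [Group G] [Finite G]
    (N : Subgroup G) [N.Normal] :
    (∀ d : ℕ, IsGCDOf (knutsonInd N) d → d = 1) ↔
      ∀ p : ℕ, p.Prime → ∀ P : Sylow p G,
        ∃ K : Subgroup G, K ≤ (P : Subgroup G) ∧ K ⊓ N = ⊥ ∧
          Nat.card K * Nat.card (N ⊓ (P : Subgroup G) : Subgroup G) =
            Nat.card (P : Subgroup G) := by
  rw [forall_isGCDOf_eq_one_iff (knutsonInd_finite N)]
  refine forall₂_congr fun p hp => ?_
  have : Fact p.Prime := ⟨hp⟩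
  exact (forall_const (Sylow p G)).symm.trans (forall_congr' (exists_mem_knutsonInd_not_dvd_iff N))
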